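/- arXiv:2508.08160 — 7 statements merged into one kernel-verified Lean document; each statement's English description precedes it below -/
import Mathlib

section
/- For every complex d×d matrix M there exist a natural number H ≤ d², unitary matrices W₁, …, W_H ∈ Matrix.unitaryGroup (Fin d) ℂ and positive reals c₁, …, c_H such that M = Σᵢ (cᵢ : ℂ) • Wᵢ and Σᵢ cᵢ = ‖M‖₁, where ‖M‖₁ denotes the trace norm of M, i.e. the trace of the positive-semidefinite square root of MᴴM (equivalently, the sum of the singular values of M). (When M = 0 the empty family, H = 0, is allowed.) -/
open scoped ComplexOrder

/-- The square root of a positive semidefinite matrix, as defined in the older Mathlib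
(`Matrix.PosSemidef.sqrt`, removed since). -/
noncomputable def Matrix.PosSemidef.sqrt {n : Type*} [Fintype n] [DecidableEq n]
    {𝕜 : Type*} [RCLike 𝕜] {A : Matrix n n 𝕜} (hA : A.PosSemidef) : Matrix n n 𝕜 :=
  hA.1.eigenvectorUnitary.1 * Matrix.diagonal ((↑) ∘ (√·) ∘ hA.1.eigenvalues) *
    (star hA.1.eigenvectorUnitary : Matrix n n 𝕜)

lemma Matrix.PosSemidef.posSemidef_sqrt {n : Type*} [Fintype n] [DecidableEq n]
    {A : Matrix n n ℂ} (hA : A.PosSemidef) : hA.sqrt.PosSemidef := by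
  unfold Matrix.PosSemidef.sqrt
  rw [Matrix.star_eq_conjTranspose]
  refine Matrix.PosSemidef.mul_mul_conjTranspose_same ?_ _
  rw [Matrix.posSemidef_diagonal_iff]
  intro i
  simp only [Function.comp_apply]
  exact Complex.zero_le_real.mpr (Real.sqrt_nonneg _)

lemma Matrix.PosSemidef.sqrt_mul_self {n : Type*} [Fintype n] [DecidableEq n]
    {A : Matrix n n ℂ} (hA : A.PosSemidef) : hA.sqrt * hA.sqrt = A := by
  have h := hA.1.spectral_theorem
  rw [Unitary.conjStarAlgAut_apply] at h
  have hU : (star hA.1.eigenvectorUnitary : Matrix n n ℂ) * hA.1.eigenvectorUnitary.1 = 1 := by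
    exact Unitary.star_mul_self_of_mem hA.1.eigenvectorUnitary.2
  unfold Matrix.PosSemidef.sqrt
  calc _ = hA.1.eigenvectorUnitary.1 * (Matrix.diagonal ((↑) ∘ (√·) ∘ hA.1.eigenvalues) *
        ((star hA.1.eigenvectorUnitary : Matrix n n ℂ) * hA.1.eigenvectorUnitary.1) *
        Matrix.diagonal ((↑) ∘ (√·) ∘ hA.1.eigenvalues)) *
        (star hA.1.eigenvectorUnitary : Matrix n n ℂ) := by simp only [mul_assoc]; rfl
    _ = _ := by
      rw [hU, mul_one, Matrix.diagonal_mul_diagonal]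
      conv_rhs => rw [h]
      congr 3
      funext i
      simp only [Function.comp_apply]
      rw [← Complex.ofReal_mul, Real.mul_self_sqrt (hA.eigenvalues_nonneg i)]
      rfl


open Matrix in
lemma exists_unitary_polar (d : ℕ) (M P : Matrix (Fin d) (Fin d) ℂ)
    (hP : P.PosSemidef) (hPM : P * P = Mᴴ * M) :
    ∃ U ∈ Matrix.unitaryGroup (Fin d) ℂ, M = U * P := by
  classical
  set hH : P.IsHermitian := hP.1
  set lam : Fin d → ℝ := hH.eigenvalues with hlam
  set V : Matrix (Fin d) (Fin d) ℂ := (hH.eigenvectorUnitary : Matrix (Fin d) (Fin d) ℂ) with hVdef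
  have hV1 : star V * V = 1 := Matrix.mem_unitaryGroup_iff'.mp hH.eigenvectorUnitary.2
  have hV2 : V * star V = 1 := Matrix.mem_unitaryGroup_iff.mp hH.eigenvectorUnitary.2
  have hspec : P = V * Matrix.diagonal (Complex.ofReal ∘ lam) * star V := by
    have h := hH.spectral_theorem; rwa [Unitary.conjStarAlgAut_apply] at h
  set B : Matrix (Fin d) (Fin d) ℂ := M * V with hBdef
  have key : Bᴴ * B = Matrix.diagonal (fun j => ((lam j : ℂ))^2) := by
    have : Bᴴ * B = star V * (P * P) * V := by
      rw [hPM]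
      rw [hBdef, Matrix.conjTranspose_mul, ← Matrix.star_eq_conjTranspose V]
      noncomm_ring
    rw [this, hspec]
    calc star V * (V * Matrix.diagonal (Complex.ofReal ∘ lam) * star V *
          (V * Matrix.diagonal (Complex.ofReal ∘ lam) * star V)) * V
        = (star V * V) * Matrix.diagonal (Complex.ofReal ∘ lam) * (star V * V) *
            Matrix.diagonal (Complex.ofReal ∘ lam) * (star V * V) := by noncomm_ring
      _ = Matrix.diagonal (fun j => ((lam j : ℂ))^2) := by
          rw [hV1]
          simp [Matrix.diagonal_mul_diagonal, sq]
  have keyent : ∀ i j, (∑ k, (starRingEnd ℂ) (B k i) * B k j)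
      = if i = j then ((lam i : ℂ))^2 else 0 := by
    intro i j
    have := congrFun (congrFun key i) j
    simpa [Matrix.mul_apply, Matrix.diagonal_apply, Matrix.conjTranspose_apply, eq_comm]
      using this
  -- columns with zero eigenvalue vanish
  have hzero : ∀ j, lam j = 0 → ∀ k, B k j = 0 := by
    intro j hj k
    have h0 : (star (fun k => B k j) ⬝ᵥ (fun k => B k j)) = 0 := by
      have := keyent j j
      simp only [if_pos rfl, hj] at this
      simpa [dotProduct, Pi.star_apply] using this
    have := dotProduct_star_self_eq_zero.mp h0
    exact congrFun this k
  -- the orthonormal family of normalized nonzero columns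
  set v : Fin d → EuclideanSpace ℂ (Fin d) :=
    fun j => WithLp.toLp 2 (fun k => ((lam j : ℂ))⁻¹ * B k j) with hvdef
  set s : Set (Fin d) := {j | lam j ≠ 0} with hsdef
  have hvon : Orthonormal ℂ (s.restrict v) := by
    rw [orthonormal_iff_ite]
    rintro ⟨i, hi⟩ ⟨j, hj⟩
    have : (inner ℂ (s.restrict v ⟨i, hi⟩) (s.restrict v ⟨j, hj⟩) : ℂ)
        = ((starRingEnd ℂ) ((lam i : ℂ))⁻¹) * ((lam j : ℂ))⁻¹
            * ∑ k, (starRingEnd ℂ) (B k i) * B k j := by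
      simp only [PiLp.inner_apply, Set.restrict, Set.domRestrict_apply, hvdef, PiLp.toLp_apply, RCLike.inner_apply',
        _root_.map_mul, Finset.mul_sum]
      exact Finset.sum_congr rfl fun k _ => by ring
    rw [this, keyent]
    by_cases hij : i = j
    · subst hij
      simp only [if_pos rfl, Subtype.mk.injEq, if_pos rfl, if_true]
      have h1 : (starRingEnd ℂ) ((lam i : ℂ))⁻¹ = ((lam i : ℂ))⁻¹ := by
        simp [← Complex.ofReal_inv]
      have hne : (lam i : ℂ) ≠ 0 := by
        simpa using Complex.ofReal_ne_zero.mpr hi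
      rw [h1, sq]
      field_simp
    · simp only [if_neg hij, mul_zero, Subtype.mk.injEq, if_neg hij]
  have hcard : Module.finrank ℂ (EuclideanSpace ℂ (Fin d)) = Fintype.card (Fin d) := by
    simp
  obtain ⟨b, hb⟩ := hvon.exists_orthonormalBasis_extension_of_card_eq hcard
  set U₀ : Matrix (Fin d) (Fin d) ℂ := Matrix.of (fun k j => b j k) with hU₀def
  have hU₀ : U₀ ∈ Matrix.unitaryGroup (Fin d) ℂ := by
    rw [Matrix.mem_unitaryGroup_iff']
    ext i j
    have := orthonormal_iff_ite.mp b.orthonormal i j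
    simp only [PiLp.inner_apply, RCLike.inner_apply'] at this
    simpa [Matrix.mul_apply, Matrix.one_apply, hU₀def] using this
  have hU₀diag : U₀ * Matrix.diagonal (Complex.ofReal ∘ lam) = B := by
    ext k j
    rw [Matrix.mul_diagonal]
    by_cases hj : lam j = 0
    · simp [hj, hzero j hj k]
    · have hbj : b j = v j := hb j hj
      have : U₀ k j = ((lam j : ℂ))⁻¹ * B k j := by
        rw [hU₀def]
        simp only [Matrix.of_apply, hbj, hvdef, PiLp.toLp_apply]
      rw [this, Function.comp_apply]
      field_simp
  refine ⟨U₀ * star V, mul_mem hU₀ (Unitary.star_mem hH.eigenvectorUnitary.2), ?_⟩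
  calc M = M * V * star V := by rw [mul_assoc, hV2, mul_one]
    _ = U₀ * Matrix.diagonal (Complex.ofReal ∘ lam) * star V := by rw [← hBdef, hU₀diag]
    _ = U₀ * star V * P := by
        rw [hspec]
        calc U₀ * Matrix.diagonal (Complex.ofReal ∘ lam) * star V
            = U₀ * (star V * V) * Matrix.diagonal (Complex.ofReal ∘ lam) * star V := by
              rw [hV1, mul_one]
          _ = U₀ * star V * (V * Matrix.diagonal (Complex.ofReal ∘ lam) * star V) := by
              noncomm_ring


open Matrix in
lemma diagonal_eq_sum_std (d : ℕ) (f : Fin d → ℂ) :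
    Matrix.diagonal f = ∑ j, f j • Matrix.single j j 1 := by
  ext a b
  simp only [Matrix.sum_apply, Matrix.smul_apply, Matrix.single, Matrix.of_apply,
    Matrix.diagonal_apply, smul_eq_mul, mul_ite, mul_one, mul_zero]
  by_cases hab : a = b
  · subst hab
    rw [if_pos rfl]
    simp only [and_self]
    rw [Finset.sum_ite_eq' Finset.univ a (fun j => f j)]
    simp
  · rw [if_neg hab, Finset.sum_eq_zero]
    intro j _
    rw [if_neg]
    rintro ⟨rfl, rfl⟩
    exact hab rfl

open Matrix in
lemma reflection_unitary (d : ℕ) (V : Matrix (Fin d) (Fin d) ℂ)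
    (hV : V ∈ Matrix.unitaryGroup (Fin d) ℂ) (j : Fin d) :
    (V * Matrix.single j j 1 * star V + V * Matrix.single j j 1 * star V - 1)
      ∈ Matrix.unitaryGroup (Fin d) ℂ := by
  have hV1 : star V * V = 1 := Matrix.mem_unitaryGroup_iff'.mp hV
  set Q : Matrix (Fin d) (Fin d) ℂ := V * Matrix.single j j 1 * star V with hQdef
  have hQ2 : Q * Q = Q := by
    calc Q * Q = V * (Matrix.single j j 1 * (star V * V) * Matrix.single j j 1)
          * star V := by rw [hQdef]; noncomm_ring
      _ = Q := by
          rw [hV1, mul_one, Matrix.single_mul_single_same, mul_one, hQdef]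
  have hQs : star Q = Q := by
    rw [hQdef]
    have hstd : star (Matrix.single j j (1:ℂ)) = Matrix.single j j 1 := by
      ext a b
      simp [Matrix.star_eq_conjTranspose, Matrix.conjTranspose_apply, Matrix.single,
        and_comm]
    rw [StarMul.star_mul, StarMul.star_mul, hstd, star_star]
    noncomm_ring
  have hRs : star (Q + Q - 1) = Q + Q - 1 := by
    simp [star_sub, star_add, hQs]
  rw [Matrix.mem_unitaryGroup_iff', hRs]
  have expand : (Q + Q - 1) * (Q + Q - 1)
      = (Q * Q + Q * Q + Q * Q + Q * Q) - (Q + Q + Q + Q) + 1 := by noncomm_ring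
  rw [expand, hQ2]
  abel

/-- **Unitary decomposition of an operator** (Lemma 2 of the supplemental material).
For every complex `d × d` matrix `M` there is a decomposition `M = ∑ i, c i • W i` into at
most `d ^ 2` unitaries `W i` with positive coefficients `c i` summing to the trace norm
`‖M‖₁ = tr √(Mᴴ M)`. -/
theorem unitary_decomposition_of_matrix (d : ℕ) (M : Matrix (Fin d) (Fin d) ℂ) :
    ∃ H : ℕ, H ≤ d ^ 2 ∧
      ∃ (W : Fin H → Matrix.unitaryGroup (Fin d) ℂ) (c : Fin H → ℝ),
        (∀ i, 0 < c i) ∧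
        M = ∑ i, (c i : ℂ) • (W i : Matrix (Fin d) (Fin d) ℂ) ∧
        ((∑ i, c i : ℝ) : ℂ) =
          ((Matrix.posSemidef_conjTranspose_mul_self M).sqrt).trace := by
  classical
  set hA := Matrix.posSemidef_conjTranspose_mul_self M with hAdef
  set P := hA.sqrt with hPdef
  have hP : P.PosSemidef := hA.posSemidef_sqrt
  have hPM : P * P = M.conjTranspose * M := hA.sqrt_mul_self
  obtain ⟨U, hU, hMU⟩ := exists_unitary_polar d M P hP hPM
  set hH : P.IsHermitian := hP.1 with hHdef
  set lam : Fin d → ℝ := hH.eigenvalues with hlamdef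
  have hlamnn : ∀ j, 0 ≤ lam j := hP.eigenvalues_nonneg
  set V : Matrix (Fin d) (Fin d) ℂ := (hH.eigenvectorUnitary : Matrix (Fin d) (Fin d) ℂ)
    with hVdef
  have hV1 : star V * V = 1 := Matrix.mem_unitaryGroup_iff'.mp hH.eigenvectorUnitary.2
  have hV2 : V * star V = 1 := Matrix.mem_unitaryGroup_iff.mp hH.eigenvectorUnitary.2
  have hspec : P = V * Matrix.diagonal (Complex.ofReal ∘ lam) * star V := by
    have h := hH.spectral_theorem; rwa [Unitary.conjStarAlgAut_apply] at h
  have htrace : P.trace = ∑ j, (lam j : ℂ) := by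
    rw [hspec, Matrix.trace_mul_cycle, hV1, one_mul, Matrix.trace_diagonal]
    simp
  set t : Finset (Fin d) := Finset.univ.filter (fun j => lam j ≠ 0) with htdef
  have hsumlam : ∑ j ∈ t, lam j = ∑ j, lam j :=
    Finset.sum_filter_of_ne (fun x _ h => h)
  set Q : Fin d → Matrix (Fin d) (Fin d) ℂ :=
    fun j => V * Matrix.single j j 1 * star V with hQdef
  have hMsum : M = ∑ j, (lam j : ℂ) • (U * Q j) := by
    rw [hMU, hspec, diagonal_eq_sum_std]
    simp only [Finset.mul_sum, Finset.sum_mul, Matrix.mul_smul, Matrix.smul_mul, hQdef,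
      mul_assoc, Function.comp_apply]
  have hMsum' : M = ∑ j ∈ t, (lam j : ℂ) • (U * Q j) := by
    rw [hMsum]
    refine (Finset.sum_filter_of_ne (fun x _ h => ?_)).symm
    intro hx
    exact h (by rw [hx]; simp)
  have hlampos : ∀ j ∈ t, 0 < lam j := by
    intro j hj
    rw [htdef, Finset.mem_filter] at hj
    exact lt_of_le_of_ne (hlamnn j) (Ne.symm hj.2)
  by_cases ht0 : t = ∅
  · -- M = 0 case
    refine ⟨0, by positivity, fun i => i.elim0, fun i => i.elim0, fun i => i.elim0, ?_, ?_⟩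
    · rw [hMsum', ht0]
      simp
    · rw [htrace, ← Complex.ofReal_sum, ← hsumlam, ht0]
      simp
  by_cases hd1 : d = 1
  · -- one-dimensional case
    subst hd1
    have hstd : Matrix.single (0 : Fin 1) (0 : Fin 1) (1:ℂ) = 1 := by
      ext a b
      fin_cases a; fin_cases b
      simp [Matrix.single]
    have hQ0 : Q 0 = 1 := by rw [hQdef]; simp [hstd, hV2]
    have h0t : (0 : Fin 1) ∈ t := by
      rcases Finset.nonempty_iff_ne_empty.mpr ht0 with ⟨j, hj⟩
      have : j = 0 := Subsingleton.elim j 0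
      rwa [this] at hj
    refine ⟨1, by norm_num, fun _ => ⟨U, hU⟩, fun _ => lam 0, fun i => hlampos 0 h0t, ?_, ?_⟩
    · rw [hMsum]
      rw [Fin.sum_univ_one, Fin.sum_univ_one, hQ0, mul_one]
    · rw [htrace, Fin.sum_univ_one, Fin.sum_univ_one]
  · -- generic case, d ≥ 2
    have hd2 : 2 ≤ d := by
      rcases Finset.nonempty_iff_ne_empty.mpr ht0 with ⟨j, _⟩
      have : 0 < d := j.pos
      omega
    set m : ℕ := t.card with hmdef
    have hmd : m ≤ d := by
      simpa using (Finset.card_le_univ t)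
    have hcard : Fintype.card (↥t ⊕ ↥t) = 2 * m := by
      simp [Fintype.card_sum, two_mul, hmdef]
    set e : (↥t ⊕ ↥t) ≃ Fin (2 * m) := Fintype.equivFinOfCardEq hcard with hedef
    set Wfun : (↥t ⊕ ↥t) → Matrix.unitaryGroup (Fin d) ℂ :=
      fun x => Sum.rec
        (fun j => ⟨U * (Q j + Q j - 1),
          mul_mem hU (reflection_unitary d V hH.eigenvectorUnitary.2 j)⟩)
        (fun _ => ⟨U, hU⟩) x with hWfundef
    set cfun : (↥t ⊕ ↥t) → ℝ := fun x => Sum.rec (fun j => lam j / 2) (fun j => lam j / 2) x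
      with hcfundef
    refine ⟨2 * m, ?_, fun i => Wfun (e.symm i), fun i => cfun (e.symm i), ?_, ?_, ?_⟩
    · calc 2 * m ≤ 2 * d := by omega
        _ ≤ d ^ 2 := by nlinarith
    · intro i
      show (0:ℝ) < cfun (e.symm i)
      rcases h : e.symm i with j | j <;>
        exact half_pos (hlampos j j.2)
    · rw [Equiv.sum_comp e.symm (fun x => ((cfun x : ℂ) • (Wfun x : Matrix (Fin d) (Fin d) ℂ)))]
      rw [Fintype.sum_sum_type, ← Finset.sum_add_distrib]
      have hterm : ∀ j : ↥t,
          ((cfun (Sum.inl j) : ℂ) • (Wfun (Sum.inl j) : Matrix (Fin d) (Fin d) ℂ))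
          + ((cfun (Sum.inr j) : ℂ) • (Wfun (Sum.inr j) : Matrix (Fin d) (Fin d) ℂ))
          = (lam j : ℂ) • (U * Q j) := by
        intro j
        show ((lam j / 2 : ℝ) : ℂ) • (U * (Q j + Q j - 1)) + ((lam j / 2 : ℝ) : ℂ) • U
          = (lam j : ℂ) • (U * Q j)
        rw [← smul_add]
        have h1 : U * ((Q j : Matrix (Fin d) (Fin d) ℂ) + Q j - 1) + U
            = (U * Q j) + (U * Q j) := by
          noncomm_ring
        rw [h1, ← two_smul ℂ (U * Q j), smul_smul]
        congr 1
        push_cast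
        ring
      rw [Finset.sum_congr rfl (fun j _ => hterm j)]
      rw [Finset.sum_coe_sort t (fun j => (lam j : ℂ) • (U * Q j))]
      exact hMsum'
    · rw [Equiv.sum_comp e.symm cfun, Fintype.sum_sum_type, ← Finset.sum_add_distrib]
      have : ∀ j : ↥t, cfun (Sum.inl j) + cfun (Sum.inr j) = lam j := fun j => by
        show lam j / 2 + lam j / 2 = lam j
        ring
      rw [Finset.sum_congr rfl (fun j _ => this j),
        Finset.sum_coe_sort t (fun j => lam j), hsumlam, htrace]
      push_cast
      rfl
end

section
/- For any unit vectors u, v ∈ ℂ^d (d ≥ 1) there exist a natural number H ≤ d, unitary matrices W₁, …, W_H ∈ Matrix.unitaryGroup (Fin d) ℂ and nonnegative reals p₁, …, p_H with Σᵢ pᵢ = 1 such that the rank-one matrix u vᴴ (with entries uₐ · conj(v_b)) equals Σᵢ (pᵢ : ℂ) • Wᵢ; that is, every rank-one operator u vᴴ with ‖u‖ = ‖v‖ = 1 is a convex combination of at most d unitary matrices. -/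
open Matrix Complex Finset

lemma exists_onb_extend (d : ℕ) [NeZero d] (u : EuclideanSpace ℂ (Fin d)) (hu : ‖u‖ = 1) :
    ∃ b : OrthonormalBasis (Fin d) ℂ (EuclideanSpace ℂ (Fin d)), b 0 = u := by
  have h : Orthonormal ℂ (({0} : Set (Fin d)).restrict (fun _ => u)) := by
    rw [orthonormal_iff_ite]
    rintro ⟨i, hi⟩ ⟨j, hj⟩
    simp only [Set.mem_singleton_iff] at hi hj
    subst hi; subst hj
    simp [Set.restrict, inner_self_eq_norm_sq_to_K, hu]
  obtain ⟨b, hb⟩ := h.exists_orthonormalBasis_extension_of_card_eq (by simp)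
  exact ⟨b, hb 0 rfl⟩

/-- Every rank-one operator `u vᴴ` built from unit vectors `u, v ∈ ℂ^d` is a convex
combination of at most `d` unitary matrices. -/
theorem rank_one_convex_combination_of_unitaries (d : ℕ) (hd : 1 ≤ d)
    (u v : EuclideanSpace ℂ (Fin d)) (hu : ‖u‖ = 1) (hv : ‖v‖ = 1) :
    ∃ H : ℕ, H ≤ d ∧
      ∃ (W : Fin H → Matrix.unitaryGroup (Fin d) ℂ) (p : Fin H → ℝ),
        (∀ i, 0 ≤ p i) ∧ (∑ i, p i) = 1 ∧
        (Matrix.of fun a b : Fin d => u a * star (v b)) =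
          ∑ i, (p i : ℂ) • (W i : Matrix (Fin d) (Fin d) ℂ) := by
  haveI : NeZero d := ⟨by omega⟩
  obtain ⟨bu, hbu⟩ := exists_onb_extend d u hu
  obtain ⟨bv, hbv⟩ := exists_onb_extend d v hv
  set ζ : ℂ := Complex.exp (2 * Real.pi * I / d) with hζdef
  have hζ : IsPrimitiveRoot ζ d := Complex.isPrimitiveRoot_exp d (by omega)
  have habs : ‖ζ‖ = 1 := by
    rw [hζdef, Complex.norm_exp]
    norm_num [div_eq_mul_inv, Complex.mul_re, Complex.mul_im]
  set U : Matrix (Fin d) (Fin d) ℂ := Matrix.of fun a b => bu b a with hUdef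
  set V : Matrix (Fin d) (Fin d) ℂ := Matrix.of fun a b => bv b a with hVdef
  have colU : ∀ (b : OrthonormalBasis (Fin d) ℂ (EuclideanSpace ℂ (Fin d)))
      (M : Matrix (Fin d) (Fin d) ℂ), (M = Matrix.of fun a c => b c a) →
      M ∈ Matrix.unitaryGroup (Fin d) ℂ := by
    intro b M hM
    rw [Matrix.mem_unitaryGroup_iff']
    ext i j
    have := b.orthonormal
    rw [orthonormal_iff_ite] at this
    have h := this i j
    rw [PiLp.inner_apply] at h
    simp only [hM, Matrix.mul_apply, Matrix.star_apply, Matrix.of_apply, Matrix.one_apply]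
    simpa [mul_comm] using h
  have hUmem : U ∈ Matrix.unitaryGroup (Fin d) ℂ := colU bu U hUdef
  have hVmem : V ∈ Matrix.unitaryGroup (Fin d) ℂ := colU bv V hVdef
  have hζpow : ∀ m : ℕ, (starRingEnd ℂ) (ζ ^ m) * ζ ^ m = 1 := by
    intro m
    rw [mul_comm, Complex.mul_conj, ← Complex.sq_norm]
    simp [map_pow, habs]
  have hDmem : ∀ k : Fin d,
      Matrix.diagonal (fun a : Fin d => ζ ^ ((k : ℕ) * (a : ℕ))) ∈
        Matrix.unitaryGroup (Fin d) ℂ := by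
    intro k
    rw [Matrix.mem_unitaryGroup_iff']
    rw [Matrix.star_eq_conjTranspose, Matrix.diagonal_conjTranspose,
      Matrix.diagonal_mul_diagonal]
    convert Matrix.diagonal_one with a
    simpa using hζpow ((k : ℕ) * (a : ℕ))
  refine ⟨d, le_refl d, fun k =>
    (⟨U, hUmem⟩ : Matrix.unitaryGroup (Fin d) ℂ) *
    ⟨_, hDmem k⟩ * star ⟨V, hVmem⟩, fun _ => 1 / d, ?_, ?_, ?_⟩
  · intro i; positivity
  · rw [Finset.sum_const, Finset.card_univ, Fintype.card_fin]
    rw [nsmul_eq_mul, mul_one_div_cancel (by exact_mod_cast (NeZero.ne d))]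
  · have key : ∀ c : Fin d, ∑ k : Fin d, ζ ^ ((k : ℕ) * (c : ℕ)) =
        if c = 0 then (d : ℂ) else 0 := by
      intro c
      by_cases hc : c = 0
      · simp [hc]
      · rw [if_neg hc]
        have h1 : (ζ ^ (c : ℕ)) ≠ 1 := by
          apply hζ.pow_ne_one_of_pos_of_lt
          · exact fun h => hc (Fin.ext h)
          · exact c.isLt
        have h2 : ∑ k : Fin d, ζ ^ ((k : ℕ) * (c : ℕ))
            = ∑ k ∈ Finset.range d, (ζ ^ (c : ℕ)) ^ k := by
          rw [show (∑ k : Fin d, ζ ^ ((k : ℕ) * (c : ℕ)))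
              = ∑ k : Fin d, (ζ ^ (c : ℕ)) ^ (k : ℕ) from by
            congr 1; funext k; rw [← pow_mul, mul_comm]]
          exact Fin.sum_univ_eq_sum_range _ d
        have h3 : (ζ ^ (c : ℕ)) ^ d = 1 := by
          rw [← pow_mul, mul_comm, pow_mul, hζ.pow_eq_one, one_pow]
        rw [h2, geom_sum_eq h1, h3]; simp
    ext a b
    rw [Matrix.sum_apply]
    have hcoe : ∀ k : Fin d,
        (((⟨U, hUmem⟩ : Matrix.unitaryGroup (Fin d) ℂ) * ⟨_, hDmem k⟩ * star ⟨V, hVmem⟩ :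
          Matrix.unitaryGroup (Fin d) ℂ) : Matrix (Fin d) (Fin d) ℂ) =
          U * Matrix.diagonal (fun c : Fin d => ζ ^ ((k : ℕ) * (c : ℕ))) * star V := by
      intro k; rfl
    simp only [hcoe, Matrix.smul_apply, smul_eq_mul]
    have entry : ∀ k : Fin d,
        (U * Matrix.diagonal (fun c : Fin d => ζ ^ ((k : ℕ) * (c : ℕ))) * star V) a b =
        ∑ c : Fin d, ζ ^ ((k : ℕ) * (c : ℕ)) * (U a c * star (V b c)) := by
      intro k
      rw [Matrix.mul_apply]
      congr 1; funext c
      rw [Matrix.mul_diagonal, Matrix.star_apply]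
      ring
    simp only [entry, Finset.mul_sum]
    rw [Finset.sum_comm]
    have : ∀ c : Fin d,
        ∑ k : Fin d, ((1 / d : ℝ) : ℂ) * (ζ ^ ((k : ℕ) * (c : ℕ)) * (U a c * star (V b c)))
        = (if c = 0 then (1 : ℂ) else 0) * (U a c * star (V b c)) := by
      intro c
      simp only [← mul_assoc]
      rw [← Finset.sum_mul]
      rw [← Finset.sum_mul]
      rw [← Finset.mul_sum]
      rw [key c]
      congr 2
      by_cases hc : c = 0
      · rw [if_pos hc, if_pos hc]
        push_cast
        simp [NeZero.ne d]
      · simp [hc]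
    simp only [this]
    rw [Finset.sum_eq_single 0]
    · simp [hUdef, hVdef, hbu, hbv]
    · intro c _ hc; simp [hc]
    · intro h; exact absurd (Finset.mem_univ 0) h
end

section
/- Under the subspace amplitude-amplification hypotheses, for all unit vectors ψ, ψ' ∈ 𝒮 one has ⟪ψ' ⊗ |0⟩, Ψψ⊥⟫ = 0; that is, the vector Ψψ⊥ := U†(cos θ • Φψ − sin θ • Φψ⊥) is orthogonal to every vector of the form ψ' ⊗ |0⟩ with ψ' a unit vector in 𝒮. -/
open Matrix Kronecker

/-- Kronecker (tensor) product of vectors: `(x ⊗ y) (a, b) = x a * y b`. -/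
noncomputable def vecTensor {n m : Type*} (x : EuclideanSpace ℂ n) (y : EuclideanSpace ℂ m) :
    EuclideanSpace ℂ (n × m) :=
  WithLp.toLp 2 (fun p => x p.1 * y p.2)

namespace SAAaux

lemma toEL_mul {ι : Type*} [Fintype ι] [DecidableEq ι]
    (A B : Matrix ι ι ℂ) (x : EuclideanSpace ℂ ι) :
    Matrix.toEuclideanLin (A * B) x = Matrix.toEuclideanLin A (Matrix.toEuclideanLin B x) := by
  simp only [Matrix.toEuclideanLin_apply, Equiv.apply_symm_apply, Matrix.mulVec_mulVec]

lemma toEL_one {ι : Type*} [Fintype ι] [DecidableEq ι] (x : EuclideanSpace ℂ ι) :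
    Matrix.toEuclideanLin (1 : Matrix ι ι ℂ) x = x := by
  simp [Matrix.toEuclideanLin_apply]

lemma inner_adj {ι : Type*} [Fintype ι] [DecidableEq ι]
    (A : Matrix ι ι ℂ) (x y : EuclideanSpace ℂ ι) :
    (inner ℂ x (Matrix.toEuclideanLin Aᴴ y) : ℂ) = inner ℂ (Matrix.toEuclideanLin A x) y := by
  rw [Matrix.toEuclideanLin_conjTranspose_eq_adjoint, LinearMap.adjoint_inner_right]

lemma inner_vecTensor {ι κ : Type*} [Fintype ι] [Fintype κ]
    (a c : EuclideanSpace ℂ ι) (b d : EuclideanSpace ℂ κ) :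
    (inner ℂ (vecTensor a b) (vecTensor c d) : ℂ) = (inner ℂ a c : ℂ) * (inner ℂ b d : ℂ) := by
  simp only [PiLp.inner_apply, RCLike.inner_apply, vecTensor, _root_.map_mul]
  rw [Finset.sum_mul_sum, Fintype.sum_prod_type]
  exact Finset.sum_congr rfl fun i _ => Finset.sum_congr rfl fun j _ => by ring

lemma orth_of_anc {n m : Type*} [Fintype n] [Fintype m] [DecidableEq n] [DecidableEq m]
    (zero : EuclideanSpace ℂ m) (b0 : m) (hb0 : zero b0 ≠ 0)
    (φ : EuclideanSpace ℂ (n × m))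
    (h : Matrix.toEuclideanLin
        ((1 : Matrix n n ℂ) ⊗ₖ (Matrix.of fun a b : m => zero a * star (zero b))) φ = 0)
    (x : EuclideanSpace ℂ n) :
    (inner ℂ (vecTensor x zero) φ : ℂ) = 0 := by
  have hS : ∀ a : n, ∑ b, (starRingEnd ℂ) (zero b) * φ (a, b) = 0 := by
    intro a
    have h1 : (Matrix.toEuclideanLin
        ((1 : Matrix n n ℂ) ⊗ₖ (Matrix.of fun a b : m => zero a * star (zero b))) φ) (a, b0)
        = 0 := by rw [h]; rfl
    simp only [Matrix.toEuclideanLin_apply, PiLp.toLp_apply,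
      Matrix.mulVec, dotProduct, Fintype.sum_prod_type,
      Matrix.kroneckerMap_apply, Matrix.of_apply, Matrix.one_apply, ite_mul, one_mul,
      zero_mul, mul_assoc, Finset.sum_ite_irrel, Finset.sum_const_zero,
      Finset.sum_ite_eq, Finset.mem_univ, if_true, ← Finset.mul_sum] at h1
    rcases mul_eq_zero.mp h1 with h2 | h2
    · exact absurd h2 hb0
    · exact h2
  have key : (inner ℂ (vecTensor x zero) φ : ℂ)
      = ∑ a, (starRingEnd ℂ) (x a) * ∑ b, (starRingEnd ℂ) (zero b) * φ (a, b) := by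
    simp only [PiLp.inner_apply, RCLike.inner_apply, vecTensor, _root_.map_mul,
      Fintype.sum_prod_type, Finset.mul_sum, mul_assoc]
    exact Finset.sum_congr rfl fun i _ => Finset.sum_congr rfl fun j _ => by ring
  rw [key]
  simp [hS]

end SAAaux

open SAAaux in
/-- **Subspace amplitude amplification, part (a)** (Lemma 3(a) of the supplemental
material): the vector `Ψψ⊥ := U† (cos θ • Φψ − sin θ • Φψ⊥)` is orthogonal to every
vector `ψ' ⊗ |0⟩` with `ψ'` a unit vector of the subspace `𝒮`. -/
theorem subspace_amplitude_amplification_orthogonality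
    (n m : ℕ) (hn : 1 ≤ n) (hm : 1 ≤ m)
    (U : Matrix (Fin n × Fin m) (Fin n × Fin m) ℂ)
    (hU : U ∈ Matrix.unitaryGroup (Fin n × Fin m) ℂ)
    (M : Matrix (Fin n) (Fin n) ℂ)
    (𝒮 : Submodule ℂ (EuclideanSpace ℂ (Fin n)))
    (θ : ℝ) (hsin : Real.sin θ ≠ 0) (hcos : Real.cos θ ≠ 0)
    (zero : EuclideanSpace ℂ (Fin m)) (hzero : ‖zero‖ = 1)
    -- (i) `M† M` acts as the identity on `𝒮`
    (hM : ∀ ψ ∈ 𝒮, ∀ ψ' ∈ 𝒮,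
      (inner ℂ ψ' (Matrix.toEuclideanLin (Mᴴ * M) ψ) : ℂ) = inner ℂ ψ' ψ)
    (Φperp : EuclideanSpace ℂ (Fin n) → EuclideanSpace ℂ (Fin n × Fin m))
    -- (ii) action of `U` on `ψ ⊗ |0⟩` for unit vectors `ψ ∈ 𝒮`
    (hUact : ∀ ψ ∈ 𝒮, ‖ψ‖ = 1 →
      Matrix.toEuclideanLin U (vecTensor ψ zero) =
        Real.sin θ • vecTensor (Matrix.toEuclideanLin M ψ) zero + Real.cos θ • Φperp ψ)
    (hperp : ∀ ψ ∈ 𝒮, ‖ψ‖ = 1 →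
      (inner ℂ (Φperp ψ) (vecTensor (Matrix.toEuclideanLin M ψ) zero) : ℂ) = 0)
    (hanc : ∀ ψ ∈ 𝒮, ‖ψ‖ = 1 →
      Matrix.toEuclideanLin
        ((1 : Matrix (Fin n) (Fin n) ℂ) ⊗ₖ (Matrix.of fun a b : Fin m => zero a * star (zero b)))
        (Φperp ψ) = 0) :
    ∀ ψ ∈ 𝒮, ‖ψ‖ = 1 → ∀ ψ' ∈ 𝒮, ‖ψ'‖ = 1 →
      (inner ℂ (vecTensor ψ' zero)
        (Matrix.toEuclideanLin Uᴴ
          (Real.cos θ • vecTensor (Matrix.toEuclideanLin M ψ) zero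
            - Real.sin θ • Φperp ψ)) : ℂ) = 0 := by
  intro ψ hψ hψ1 ψ' hψ' hψ'1
  -- a coordinate of `zero` is nonzero
  obtain ⟨b0, hb0⟩ : ∃ b0, zero b0 ≠ 0 := by
    by_contra hc
    push_neg at hc
    have : zero = 0 := by ext b; simpa using hc b
    rw [this, norm_zero] at hzero
    exact one_ne_zero hzero.symm
  have horthψ : ∀ x, (inner ℂ (vecTensor x zero) (Φperp ψ) : ℂ) = 0 :=
    orth_of_anc zero b0 hb0 _ (hanc ψ hψ hψ1)
  have horthψ' : ∀ x, (inner ℂ (vecTensor x zero) (Φperp ψ') : ℂ) = 0 :=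
    orth_of_anc zero b0 hb0 _ (hanc ψ' hψ' hψ'1)
  have hzz : (inner ℂ zero zero : ℂ) = 1 := by
    rw [inner_self_eq_norm_sq_to_K, hzero]; norm_num
  -- ⟪Φψ', Φψ⟫ = ⟪ψ', ψ⟫
  have hA : (inner ℂ (vecTensor (Matrix.toEuclideanLin M ψ') zero)
      (vecTensor (Matrix.toEuclideanLin M ψ) zero) : ℂ) = inner ℂ ψ' ψ := by
    rw [inner_vecTensor, hzz, mul_one, ← inner_adj, ← toEL_mul]
    exact hM ψ hψ ψ' hψ'
  have hsmul : ∀ (r : ℝ) (v : EuclideanSpace ℂ (Fin n × Fin m)), r • v = (r : ℂ) • v :=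
    fun r v => RCLike.real_smul_eq_coe_smul (K := ℂ) r v
  have hUψ := hUact ψ hψ hψ1
  have hUψ' := hUact ψ' hψ' hψ'1
  rw [hsmul, hsmul] at hUψ hUψ'
  -- unitarity: U preserves inner products
  have hUinner : ∀ x y : EuclideanSpace ℂ (Fin n × Fin m),
      (inner ℂ (Matrix.toEuclideanLin U x) (Matrix.toEuclideanLin U y) : ℂ) = inner ℂ x y := by
    intro x y
    rw [← inner_adj, ← toEL_mul]
    have h1 : Uᴴ * U = 1 := hU.1
    rw [h1, toEL_one]
  -- cross terms vanish
  have hc1 : (inner ℂ (vecTensor (Matrix.toEuclideanLin M ψ') zero) (Φperp ψ) : ℂ) = 0 :=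
    horthψ _
  have hc1' : (inner ℂ (vecTensor (Matrix.toEuclideanLin M ψ') zero) (Φperp ψ') : ℂ) = 0 :=
    horthψ' _
  have hc2 : (inner ℂ (Φperp ψ') (vecTensor (Matrix.toEuclideanLin M ψ) zero) : ℂ) = 0 := by
    rw [← inner_conj_symm, horthψ' _, map_zero]
  have hs2 : (Real.sin θ : ℂ) * Real.sin θ + (Real.cos θ : ℂ) * Real.cos θ = 1 := by
    have hr : Real.sin θ * Real.sin θ + Real.cos θ * Real.cos θ = 1 := by
      nlinarith [Real.sin_sq_add_cos_sq θ]
    exact_mod_cast congrArg (Complex.ofReal) hr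
  -- ⟪Φψ'⊥, Φψ⊥⟫ = ⟪ψ', ψ⟫
  have hB : (inner ℂ (Φperp ψ') (Φperp ψ) : ℂ) = inner ℂ ψ' ψ := by
    have h0 := hUinner (vecTensor ψ' zero) (vecTensor ψ zero)
    rw [hUψ, hUψ', inner_vecTensor, hzz, mul_one] at h0
    simp only [inner_add_left, inner_add_right, inner_smul_left, inner_smul_right,
      Complex.conj_ofReal, hA, hc1, hc2, mul_zero, add_zero, zero_add] at h0
    have hcne : (Real.cos θ : ℂ) * Real.cos θ ≠ 0 :=
      mul_ne_zero (Complex.ofReal_ne_zero.mpr hcos) (Complex.ofReal_ne_zero.mpr hcos)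
    apply mul_left_cancel₀ hcne
    linear_combination h0 - (inner ℂ ψ' ψ : ℂ) * hs2
  rw [hsmul, hsmul, inner_adj, hUψ']
  simp only [inner_sub_right, inner_add_left, inner_smul_left, inner_smul_right,
    Complex.conj_ofReal, hA, hB, hc1, hc2, mul_zero, add_zero, zero_add]
  ring
end

section
/- In the linear-combination-of-unitaries setup, for every vector ψ ∈ ℂ^d one has (1_d ⊗ (e 0)ᴴ) applied to U *ᵥ (ψ ⊗ e 0) equals (1/C) • (M *ᵥ ψ); that is, the component of U(ψ ⊗ e 0) along the ancilla basis vector e 0 is exactly (1/C) M ψ. -/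
open Matrix Kronecker

/-- **Linear combination of unitaries**: with `M = ∑ i, c i • W i`, `C = ∑ i, c i`,
`B |0⟩ = (1/√C) ∑ i, √(c i) |i⟩`, `W_ctrl = ∑ i, W i ⊗ |i⟩⟨i|` and
`U = (1 ⊗ B†) W_ctrl (1 ⊗ B)`, the component of `U (ψ ⊗ |0⟩)` along the ancilla basis
vector `|0⟩` is exactly `(1/C) • (M ψ)`. -/
theorem lcu_block_encoding (d H : ℕ) (hd : 1 ≤ d) (hH : 1 ≤ H)
    (W : Fin H → Matrix (Fin d) (Fin d) ℂ)
    (hW : ∀ i, W i ∈ Matrix.unitaryGroup (Fin d) ℂ)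
    (c : Fin H → ℝ) (hc : ∀ i, 0 < c i)
    (B : Matrix (Fin H) (Fin H) ℂ) (hB : B ∈ Matrix.unitaryGroup (Fin H) ℂ)
    (hB0 : B *ᵥ (Pi.single (⟨0, hH⟩ : Fin H) 1 : Fin H → ℂ) =
      ((1 / Real.sqrt (∑ i, c i) : ℝ) : ℂ) •
        ∑ i, ((Real.sqrt (c i) : ℝ) : ℂ) • (Pi.single i (1 : ℂ) : Fin H → ℂ))
    (ψ : Fin d → ℂ) :
    (fun a : Fin d =>
        ((((1 : Matrix (Fin d) (Fin d) ℂ) ⊗ₖ Bᴴ) *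
            (∑ i, W i ⊗ₖ Matrix.single i i (1 : ℂ)) *
            ((1 : Matrix (Fin d) (Fin d) ℂ) ⊗ₖ B)) *ᵥ
          (fun p : Fin d × Fin H => ψ p.1 * (Pi.single (⟨0, hH⟩ : Fin H) (1 : ℂ) : Fin H → ℂ) p.2))
          (a, ⟨0, hH⟩))
      = ((1 / (∑ i, c i) : ℝ) : ℂ) • ((∑ i, (c i : ℂ) • W i) *ᵥ ψ) := by
  set z : Fin H := ⟨0, hH⟩
  have hB0' : ∀ j : Fin H, B j z
      = ((1 / Real.sqrt (∑ i, c i) : ℝ) : ℂ) * ((Real.sqrt (c j) : ℝ) : ℂ) := by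
    intro j
    have := congrFun hB0 j
    simpa [Matrix.mulVec_single, Pi.single_apply, Finset.sum_ite_eq'] using this
  have h1 : ((1 : Matrix (Fin d) (Fin d) ℂ) ⊗ₖ B) *ᵥ
      (fun p : Fin d × Fin H => ψ p.1 * (Pi.single z (1 : ℂ) : Fin H → ℂ) p.2)
      = fun p : Fin d × Fin H => ψ p.1 * B p.2 z := by
    funext p
    obtain ⟨b, j⟩ := p
    simp [Matrix.mulVec, dotProduct, Fintype.sum_prod_type, Matrix.one_apply,
      Pi.single_apply, mul_ite, ite_mul, Finset.sum_ite_eq, Finset.sum_ite_eq',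
      mul_comm]
  have h2 : (∑ i, W i ⊗ₖ Matrix.single i i (1 : ℂ)) *ᵥ
      (fun p : Fin d × Fin H => ψ p.1 * B p.2 z)
      = fun p : Fin d × Fin H => (W p.2 *ᵥ ψ) p.1 * B p.2 z := by
    funext p
    obtain ⟨b, j⟩ := p
    simp [Matrix.mulVec, dotProduct, Fintype.sum_prod_type, Matrix.sum_apply,
      Matrix.single, mul_ite, ite_mul, Finset.sum_ite_eq, Finset.sum_ite_eq',
      Finset.mul_sum, Finset.sum_mul, ite_and, mul_comm, mul_left_comm]
    exact Finset.sum_congr rfl fun x _ => (mul_assoc _ _ _).symm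
  funext a
  rw [← Matrix.mulVec_mulVec, ← Matrix.mulVec_mulVec, h1, h2]
  have hC : (0:ℝ) < ∑ i, c i :=
    Finset.sum_pos (fun i _ => hc i) ⟨z, Finset.mem_univ z⟩
  have key : ∀ j : Fin H, (starRingEnd ℂ) (B j z) * B j z = ((c j / (∑ i, c i) : ℝ) : ℂ) := by
    intro j
    have hb : B j z = (((1 / Real.sqrt (∑ i, c i)) * Real.sqrt (c j) : ℝ) : ℂ) := by
      rw [hB0']; push_cast; ring
    have hr : ((1 / Real.sqrt (∑ i, c i) : ℝ) * Real.sqrt (c j)) *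
        ((1 / Real.sqrt (∑ i, c i)) * Real.sqrt (c j)) = c j / (∑ i, c i) := by
      rw [show ((1 / Real.sqrt (∑ i, c i) : ℝ) * Real.sqrt (c j)) *
          ((1 / Real.sqrt (∑ i, c i)) * Real.sqrt (c j))
          = (Real.sqrt (c j) * Real.sqrt (c j)) /
            ((Real.sqrt (∑ i, c i)) * Real.sqrt (∑ i, c i)) by ring]
      rw [Real.mul_self_sqrt (hc j).le, Real.mul_self_sqrt hC.le]
    rw [hb, Complex.conj_ofReal, ← Complex.ofReal_mul, hr]
  have hR : ((1 / (∑ i, c i) : ℝ) : ℂ) • ((∑ i, (c i : ℂ) • W i) *ᵥ ψ)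
      = fun a : Fin d => ∑ j, ((c j / (∑ i, c i) : ℝ) : ℂ) * ((W j *ᵥ ψ) a) := by
    funext a
    simp only [Pi.smul_apply, Matrix.mulVec, dotProduct, Matrix.sum_apply,
      Matrix.smul_apply, smul_eq_mul, Finset.mul_sum, Finset.sum_mul]
    rw [Finset.sum_comm]
    refine Finset.sum_congr rfl fun j _ => ?_
    refine Finset.sum_congr rfl fun x _ => ?_
    push_cast
    ring
  rw [hR]
  conv_lhs => simp only [Matrix.mulVec, dotProduct, Fintype.sum_prod_type,
    Matrix.kroneckerMap_apply, Matrix.one_apply, Matrix.conjTranspose_apply,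
    ite_mul, one_mul, zero_mul]
  rw [Finset.sum_comm]
  simp only [Finset.sum_ite_eq, Finset.mem_univ, if_true]
  refine Finset.sum_congr rfl fun j _ => ?_
  show (starRingEnd ℂ) (B j z) * ((W j *ᵥ ψ) a * B j z) = _
  rw [mul_left_comm, key j, mul_comm]
end

section
/- In the linear-combination-of-unitaries setup, suppose ψ ∈ ℂ^d is a unit vector with ‖M *ᵥ ψ‖ = 1. Then C ≥ 1, and there exists a vector Φ⊥ ∈ ℂ^d ⊗ ℂ^H satisfying (1_d ⊗ (e 0)(e 0)ᴴ) *ᵥ Φ⊥ = 0 and ‖Φ⊥‖² = 1 − 1/C², such that U *ᵥ (ψ ⊗ e 0) = (1/C) • ((M *ᵥ ψ) ⊗ e 0) + Φ⊥. -/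
open Matrix Kronecker
open scoped InnerProductSpace
set_option linter.unusedSectionVars false

section helpers

variable {n m ι : Type*} [Fintype n] [Fintype m] [Fintype ι] [DecidableEq n] [DecidableEq m]

lemma sum_mulVec' (A : ι → Matrix n n ℂ) (x : n → ℂ) :
    (∑ i, A i) *ᵥ x = ∑ i, A i *ᵥ x := by
  funext k
  simp [Matrix.mulVec, dotProduct, Matrix.sum_apply, Finset.sum_mul, Finset.sum_apply]
  rw [Finset.sum_comm]

lemma mulVec_sum' (A : Matrix n n ℂ) (f : ι → n → ℂ) :
    A *ᵥ (∑ i, f i) = ∑ i, A *ᵥ f i := by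
  funext k
  simp [Matrix.mulVec, dotProduct, Finset.sum_apply, Finset.mul_sum]
  rw [Finset.sum_comm]

lemma mulVec_smul' (A : Matrix n n ℂ) (a : ℂ) (x : n → ℂ) :
    A *ᵥ (a • x) = a • (A *ᵥ x) := by
  funext k
  simp [Matrix.mulVec, dotProduct, Finset.mul_sum, mul_left_comm]

lemma kron_mulVec (A : Matrix n n ℂ) (B : Matrix m m ℂ) (x : n → ℂ) (y : m → ℂ) :
    (A ⊗ₖ B) *ᵥ (fun p => x p.1 * y p.2) = fun p => (A *ᵥ x) p.1 * (B *ᵥ y) p.2 := by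
  funext p
  obtain ⟨a, b⟩ := p
  simp only [Matrix.mulVec, dotProduct, kroneckerMap_apply, Fintype.sum_prod_type,
    Finset.sum_mul_sum]
  refine Finset.sum_congr rfl fun i _ => Finset.sum_congr rfl fun j _ => by ring

lemma star_kron (A : Matrix n n ℂ) (B : Matrix m m ℂ) : (A ⊗ₖ B)ᴴ = Aᴴ ⊗ₖ Bᴴ := by
  ext ⟨a, b⟩ ⟨a', b'⟩
  simp [Matrix.conjTranspose_apply, kroneckerMap_apply]

lemma kron_unitary {A : Matrix n n ℂ} {B : Matrix m m ℂ}
    (hA : A ∈ Matrix.unitaryGroup n ℂ) (hB : B ∈ Matrix.unitaryGroup m ℂ) :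
    A ⊗ₖ B ∈ Matrix.unitaryGroup (n × m) ℂ := by
  rw [Matrix.mem_unitaryGroup_iff] at hA hB ⊢
  rw [Matrix.star_eq_conjTranspose] at hA hB ⊢
  rw [star_kron, ← Matrix.mul_kronecker_mul, hA, hB, Matrix.one_kronecker_one]

lemma sum_stdBasis_diag_one : (∑ i : m, Matrix.single i i (1 : ℂ)) = 1 := by
  ext a b
  simp only [Matrix.sum_apply, Matrix.single, Matrix.of_apply, Matrix.one_apply]
  rcases eq_or_ne a b with rfl | h
  · simp
  · rw [if_neg h, Finset.sum_eq_zero]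
    intro i _
    rw [if_neg]
    rintro ⟨rfl, rfl⟩
    exact h rfl

lemma stdBasis_mulVec (j : m) (w : m → ℂ) :
    Matrix.single j j (1 : ℂ) *ᵥ w = w j • (Pi.single j 1 : m → ℂ) := by
  funext k
  by_cases hk : k = j <;>
    simp [Matrix.single_mulVec, Function.update_apply, Pi.single_apply, hk]

lemma norm_toEuclideanLin_unitary {A : Matrix n n ℂ} (hA : A ∈ Matrix.unitaryGroup n ℂ)
    (x : EuclideanSpace ℂ n) : ‖Matrix.toEuclideanLin A x‖ = ‖x‖ := by
  have h1 : Aᴴ * A = 1 := hA.1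
  have h2 : Matrix.toEuclideanLin Aᴴ (Matrix.toEuclideanLin A x) = x := by
    rw [Matrix.toEuclideanLin_apply, Matrix.toEuclideanLin_apply]
    simp only [Equiv.apply_symm_apply, Matrix.mulVec_mulVec, h1, Matrix.one_mulVec]
  have h3 : ⟪Matrix.toEuclideanLin A x, Matrix.toEuclideanLin A x⟫_ℂ = ⟪x, x⟫_ℂ := by
    rw [← LinearMap.adjoint_inner_left, ← Matrix.toEuclideanLin_conjTranspose_eq_adjoint, h2]
  rw [@norm_eq_sqrt_re_inner ℂ _ _ _ _ (Matrix.toEuclideanLin A x), @norm_eq_sqrt_re_inner ℂ _ _ _ _ x,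
    h3]

lemma norm_vecTensor_single (x : EuclideanSpace ℂ n) (j : m) :
    ‖vecTensor x (EuclideanSpace.single j (1 : ℂ))‖ = ‖x‖ := by
  rw [EuclideanSpace.norm_eq, EuclideanSpace.norm_eq]
  congr 1
  rw [Fintype.sum_prod_type]
  refine Finset.sum_congr rfl fun a _ => ?_
  rw [Finset.sum_eq_single j]
  · simp [vecTensor, EuclideanSpace.single_apply]
  · intro b _ hb
    simp [vecTensor, EuclideanSpace.single_apply, hb]
  · simp

lemma stdBasis_diag_conjTranspose (i : m) :
    (Matrix.single i i (1 : ℂ))ᴴ = Matrix.single i i (1 : ℂ) := by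
  ext a b
  simp only [Matrix.conjTranspose_apply, Matrix.single, Matrix.of_apply]
  split_ifs with h1 h2 h2
  · simp
  · exact absurd ⟨h1.2, h1.1⟩ h2
  · exact absurd ⟨h2.2, h2.1⟩ h1
  · simp

lemma wctrl_unitary {d H : ℕ} (W : Fin H → Matrix (Fin d) (Fin d) ℂ)
    (hW : ∀ i, W i ∈ Matrix.unitaryGroup (Fin d) ℂ) :
    (∑ i, W i ⊗ₖ Matrix.single i i (1 : ℂ)) ∈
      Matrix.unitaryGroup (Fin d × Fin H) ℂ := by
  rw [Matrix.mem_unitaryGroup_iff']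
  rw [Matrix.star_eq_conjTranspose, Matrix.conjTranspose_sum]
  simp_rw [star_kron, stdBasis_diag_conjTranspose]
  rw [Finset.sum_mul_sum]
  have hterm : ∀ i ∈ Finset.univ, ∀ j ∈ Finset.univ,
      ((W i)ᴴ ⊗ₖ Matrix.single i i (1 : ℂ)) *
        (W j ⊗ₖ Matrix.single j j (1 : ℂ)) =
      if i = j then (1 : Matrix (Fin d) (Fin d) ℂ) ⊗ₖ Matrix.single i i (1 : ℂ)
        else 0 := by
    intro i _ j _
    rw [← Matrix.mul_kronecker_mul]
    rcases eq_or_ne i j with rfl | h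
    · have h1 : (W i)ᴴ * W i = 1 := (hW i).1
      rw [if_pos rfl, Matrix.single_mul_single_same, mul_one, h1]
    · have h2 : Matrix.single i i (1 : ℂ) * Matrix.single j j (1 : ℂ) = 0 := by
        simp [Matrix.single_mul_single_of_ne, h]
      rw [if_neg h, h2, Matrix.kronecker_zero]
  rw [Finset.sum_congr rfl fun i hi => Finset.sum_congr rfl fun j hj => hterm i hi j hj]
  simp only [Finset.sum_ite_eq, Finset.mem_univ, if_pos]
  have : ∑ i : Fin H, (1 : Matrix (Fin d) (Fin d) ℂ) ⊗ₖ Matrix.single i i (1 : ℂ)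
      = (1 : Matrix (Fin d) (Fin d) ℂ) ⊗ₖ ∑ i : Fin H, Matrix.single i i (1 : ℂ) := by
    ext ⟨a, b⟩ ⟨a', b'⟩
    simp [Matrix.sum_apply, kroneckerMap_apply, Finset.mul_sum]
  rw [this, sum_stdBasis_diag_one, Matrix.one_kronecker_one]

end helpers

/-- **Linear combination of unitaries, amplitude form**: if `ψ` is a unit vector with
`‖M ψ‖ = 1`, then `C ≥ 1` and `U (ψ ⊗ |0⟩) = (1/C) • (M ψ) ⊗ |0⟩ + Φ⊥`, where `Φ⊥` is
annihilated by `1 ⊗ |0⟩⟨0|` and has `‖Φ⊥‖² = 1 − 1/C²`. -/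
theorem lcu_amplitude_decomposition (d H : ℕ) (hd : 1 ≤ d) (hH : 1 ≤ H)
    (W : Fin H → Matrix (Fin d) (Fin d) ℂ)
    (hW : ∀ i, W i ∈ Matrix.unitaryGroup (Fin d) ℂ)
    (c : Fin H → ℝ) (hc : ∀ i, 0 < c i)
    (B : Matrix (Fin H) (Fin H) ℂ) (hB : B ∈ Matrix.unitaryGroup (Fin H) ℂ)
    (hB0 : B *ᵥ (Pi.single (⟨0, hH⟩ : Fin H) 1 : Fin H → ℂ) =
      ((1 / Real.sqrt (∑ i, c i) : ℝ) : ℂ) •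
        ∑ i, ((Real.sqrt (c i) : ℝ) : ℂ) • (Pi.single i (1 : ℂ) : Fin H → ℂ))
    (ψ : EuclideanSpace ℂ (Fin d)) (hψ : ‖ψ‖ = 1)
    (hMψ : ‖Matrix.toEuclideanLin (∑ i, (c i : ℂ) • W i) ψ‖ = 1) :
    1 ≤ ∑ i, c i ∧
    ∃ Φperp : EuclideanSpace ℂ (Fin d × Fin H),
      Matrix.toEuclideanLin
          ((1 : Matrix (Fin d) (Fin d) ℂ) ⊗ₖ
            Matrix.single (⟨0, hH⟩ : Fin H) (⟨0, hH⟩ : Fin H) (1 : ℂ)) Φperp = 0 ∧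
      ‖Φperp‖ ^ 2 = 1 - 1 / (∑ i, c i) ^ 2 ∧
      Matrix.toEuclideanLin
          (((1 : Matrix (Fin d) (Fin d) ℂ) ⊗ₖ Bᴴ) *
            (∑ i, W i ⊗ₖ Matrix.single i i (1 : ℂ)) *
            ((1 : Matrix (Fin d) (Fin d) ℂ) ⊗ₖ B))
          (vecTensor ψ (EuclideanSpace.single (⟨0, hH⟩ : Fin H) 1))
        = ((1 / (∑ i, c i) : ℝ) : ℂ) •
            vecTensor (Matrix.toEuclideanLin (∑ i, (c i : ℂ) • W i) ψ)
              (EuclideanSpace.single (⟨0, hH⟩ : Fin H) 1)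
          + Φperp := by
  have hFinH : Nonempty (Fin H) := ⟨⟨0, hH⟩⟩
  set z : Fin H := ⟨0, hH⟩ with hz
  set C : ℝ := ∑ i, c i with hCdef
  have hC0 : 0 < C := Finset.sum_pos (fun i _ => hc i) Finset.univ_nonempty
  set M : Matrix (Fin d) (Fin d) ℂ := ∑ i, (c i : ℂ) • W i with hMdef
  -- the ancilla basis vector and the first column of B
  set e0 : Fin H → ℂ := Pi.single z 1 with he0
  set u : Fin H → ℂ := B *ᵥ e0 with hu_def
  have hu : ∀ i, u i = ((Real.sqrt (c i) / Real.sqrt C : ℝ) : ℂ) := by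
    intro i
    rw [hB0]
    simp only [Pi.smul_apply, Finset.sum_apply, Pi.single_apply, smul_eq_mul]
    rw [Finset.sum_eq_single i]
    · push_cast
      simp
      ring
    · intro b _ hb
      simp [Ne.symm hb]
    · simp
  -- Part 1 : 1 ≤ C
  have hMψ_sum : Matrix.toEuclideanLin M ψ = ∑ i, (c i : ℂ) • Matrix.toEuclideanLin (W i) ψ := by
    rw [hMdef, map_sum]
    simp only [LinearMap.sum_apply]
    refine Finset.sum_congr rfl fun i _ => ?_
    rw [LinearEquiv.map_smul, LinearMap.smul_apply]
  have hC1 : 1 ≤ C := by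
    have hle : ‖Matrix.toEuclideanLin M ψ‖ ≤ C := by
      rw [hMψ_sum]
      refine le_trans (norm_sum_le _ _) (le_of_eq ?_)
      rw [hCdef]
      refine Finset.sum_congr rfl fun i _ => ?_
      rw [norm_smul, norm_toEuclideanLin_unitary (hW i) ψ, hψ, mul_one, Complex.norm_real,
        Real.norm_of_nonneg (hc i).le]
    rw [hMψ] at hle
    exact hle
  refine ⟨hC1, ?_⟩
  -- abbreviations
  set MψE : EuclideanSpace ℂ (Fin d) := Matrix.toEuclideanLin M ψ with hMψE
  set Φ : EuclideanSpace ℂ (Fin d × Fin H) :=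
    ((1 / C : ℝ) : ℂ) • vecTensor MψE (EuclideanSpace.single z 1) with hΦdef
  set vE : EuclideanSpace ℂ (Fin d × Fin H) :=
    Matrix.toEuclideanLin
      (((1 : Matrix (Fin d) (Fin d) ℂ) ⊗ₖ Bᴴ) *
        (∑ i, W i ⊗ₖ Matrix.single i i (1 : ℂ)) *
        ((1 : Matrix (Fin d) (Fin d) ℂ) ⊗ₖ B))
      (vecTensor ψ (EuclideanSpace.single z 1)) with hvEdef
  -- function-level computation of vE
  have s1 : ((1 : Matrix (Fin d) (Fin d) ℂ) ⊗ₖ B) *ᵥ (fun p : Fin d × Fin H => ψ p.1 * e0 p.2)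
      = fun p : Fin d × Fin H => ψ p.1 * u p.2 := by
    rw [kron_mulVec, Matrix.one_mulVec, ← hu_def]
  have s2 : (∑ i, W i ⊗ₖ Matrix.single i i (1 : ℂ)) *ᵥ
        (fun p : Fin d × Fin H => ψ p.1 * u p.2)
      = ∑ i, u i • (fun p : Fin d × Fin H =>
          (W i *ᵥ ψ) p.1 * (Pi.single i 1 : Fin H → ℂ) p.2) := by
    rw [sum_mulVec']
    refine Finset.sum_congr rfl fun i _ => ?_
    rw [kron_mulVec, stdBasis_mulVec]
    funext p
    simp only [Pi.smul_apply, smul_eq_mul]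
    ring
  have s3 : (((1 : Matrix (Fin d) (Fin d) ℂ) ⊗ₖ Bᴴ) *
        (∑ i, W i ⊗ₖ Matrix.single i i (1 : ℂ)) *
        ((1 : Matrix (Fin d) (Fin d) ℂ) ⊗ₖ B)) *ᵥ (fun p : Fin d × Fin H => ψ p.1 * e0 p.2)
      = ∑ i, u i • (fun p : Fin d × Fin H =>
          (W i *ᵥ ψ) p.1 * (Bᴴ *ᵥ (Pi.single i 1 : Fin H → ℂ)) p.2) := by
    rw [← Matrix.mulVec_mulVec, ← Matrix.mulVec_mulVec, s1, s2, mulVec_sum']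
    refine Finset.sum_congr rfl fun i _ => ?_
    rw [mulVec_smul', kron_mulVec, Matrix.one_mulVec]
  have hvE2 : vE = ∑ i, u i • (fun p : Fin d × Fin H =>
      (W i *ᵥ ψ) p.1 * (Bᴴ *ᵥ (Pi.single i 1 : Fin H → ℂ)) p.2) := s3
  -- column entries of Bᴴ
  have hBHz : ∀ i, (Bᴴ *ᵥ (Pi.single i 1 : Fin H → ℂ)) z = (starRingEnd ℂ) (u i) := by
    intro i
    show (∑ l, Bᴴ z l * (Pi.single i 1 : Fin H → ℂ) l) = (starRingEnd ℂ) (u i)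
    rw [hu_def]
    show _ = (starRingEnd ℂ) (∑ l, B i l * e0 l)
    rw [he0, map_sum]
    rw [Finset.sum_eq_single i, Finset.sum_eq_single z]
    · simp [Matrix.conjTranspose_apply, Pi.single_apply]
    · intro b _ hb
      simp [Pi.single_apply, hb]
    · simp
    · intro b _ hb
      simp [Pi.single_apply, hb]
    · simp
  have hcoef : ∀ i, u i * (starRingEnd ℂ) (u i) = ((c i / C : ℝ) : ℂ) := by
    intro i
    rw [hu i, Complex.conj_ofReal, ← Complex.ofReal_mul]
    congr 1
    rw [div_mul_div_comm, Real.mul_self_sqrt (hc i).le, Real.mul_self_sqrt hC0.le]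
  -- function-level form of M *ᵥ ψ
  have hMfun : (M *ᵥ (ψ : Fin d → ℂ)) = ∑ i, (c i : ℂ) • (W i *ᵥ (ψ : Fin d → ℂ)) := by
    rw [hMdef, sum_mulVec']
    exact Finset.sum_congr rfl fun i _ => Matrix.smul_mulVec _ _ _
  -- function-level form of Φ
  have hΦfun : Φ = ∑ i, ((c i / C : ℝ) : ℂ) • (fun p : Fin d × Fin H =>
      (W i *ᵥ ψ) p.1 * (Pi.single z 1 : Fin H → ℂ) p.2) := by
    show ((1 / C : ℝ) : ℂ) • (fun p : Fin d × Fin H =>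
        (M *ᵥ (ψ : Fin d → ℂ)) p.1 * (Pi.single z 1 : Fin H → ℂ) p.2) = _
    rw [hMfun]
    funext p
    simp only [Pi.smul_apply, smul_eq_mul, Finset.sum_apply, Finset.sum_mul, Finset.mul_sum]
    refine Finset.sum_congr rfl fun i _ => ?_
    push_cast
    ring
  -- projector applied to vE
  have keyfun : ((1 : Matrix (Fin d) (Fin d) ℂ) ⊗ₖ Matrix.single z z (1 : ℂ)) *ᵥ
      (∑ i, u i • (fun p : Fin d × Fin H =>
        (W i *ᵥ ψ) p.1 * (Bᴴ *ᵥ (Pi.single i 1 : Fin H → ℂ)) p.2))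
      = ∑ i, ((c i / C : ℝ) : ℂ) • (fun p : Fin d × Fin H =>
        (W i *ᵥ ψ) p.1 * (Pi.single z 1 : Fin H → ℂ) p.2) := by
    rw [mulVec_sum']
    refine Finset.sum_congr rfl fun i _ => ?_
    rw [mulVec_smul', kron_mulVec, Matrix.one_mulVec, stdBasis_mulVec, hBHz]
    rw [← hcoef i]
    funext p
    simp only [Pi.smul_apply, smul_eq_mul, Pi.single_apply]
    ring
  have keyE1 : Matrix.toEuclideanLin
      ((1 : Matrix (Fin d) (Fin d) ℂ) ⊗ₖ Matrix.single z z (1 : ℂ)) vE = Φ := by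
    have := congrArg (WithLp.toLp 2) keyfun
    rw [← hvE2, ← hΦfun] at this
    exact this
  have keyE2 : Matrix.toEuclideanLin
      ((1 : Matrix (Fin d) (Fin d) ℂ) ⊗ₖ Matrix.single z z (1 : ℂ)) Φ = Φ := by
    show WithLp.toLp 2 (((1 : Matrix (Fin d) (Fin d) ℂ) ⊗ₖ Matrix.single z z (1 : ℂ)) *ᵥ
      (((1 / C : ℝ) : ℂ) • (fun p : Fin d × Fin H =>
        (MψE : Fin d → ℂ) p.1 * (Pi.single z 1 : Fin H → ℂ) p.2))) = Φ
    rw [mulVec_smul', kron_mulVec, Matrix.one_mulVec, stdBasis_mulVec, Pi.single_eq_same,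
      one_smul]
    rfl
  refine ⟨vE - Φ, ?_, ?_, ?_⟩
  · rw [map_sub, keyE1, keyE2, sub_self]
  · -- norm computation
    have hvnorm : ‖vE‖ = 1 := by
      have hU : (((1 : Matrix (Fin d) (Fin d) ℂ) ⊗ₖ Bᴴ) *
          (∑ i, W i ⊗ₖ Matrix.single i i (1 : ℂ)) *
          ((1 : Matrix (Fin d) (Fin d) ℂ) ⊗ₖ B)) ∈ Matrix.unitaryGroup (Fin d × Fin H) ℂ := by
        refine mul_mem (mul_mem (kron_unitary (one_mem _) ?_) (wctrl_unitary W hW))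
          (kron_unitary (one_mem _) hB)
        rw [← Matrix.star_eq_conjTranspose]
        exact Unitary.star_mem hB
      rw [hvEdef, norm_toEuclideanLin_unitary hU, norm_vecTensor_single, hψ]
    have hΦnorm : ‖Φ‖ = 1 / C := by
      rw [hΦdef, norm_smul, norm_vecTensor_single, hMψE, hMψ, mul_one, Complex.norm_real,
        Real.norm_of_nonneg (by positivity)]
    have hsub : ∀ (x y : EuclideanSpace ℂ (Fin d × Fin H)) (p : Fin d × Fin H),
        (x - y) p = x p - y p := fun x y p => rfl
    have hvp : ∀ a : Fin d, vE (a, z) = Φ (a, z) := by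
      intro a
      have h1 := congrArg (fun v : EuclideanSpace ℂ (Fin d × Fin H) => v (a, z)) keyE1
      have h2 : (((1 : Matrix (Fin d) (Fin d) ℂ) ⊗ₖ Matrix.single z z (1 : ℂ)) *ᵥ
          (vE : Fin d × Fin H → ℂ)) (a, z) = vE (a, z) := by
        show (∑ q : Fin d × Fin H,
          ((1 : Matrix (Fin d) (Fin d) ℂ) ⊗ₖ Matrix.single z z (1 : ℂ)) (a, z) q *
            vE q) = vE (a, z)
        rw [Fintype.sum_prod_type]
        rw [Finset.sum_eq_single a]
        · rw [Finset.sum_eq_single z]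
          · simp [Matrix.one_apply, Matrix.single_apply_same]
          · intro b _ hb
            simp [Matrix.one_apply, Matrix.single, Ne.symm hb]
          · simp
        · intro b _ hb
          refine Finset.sum_eq_zero fun k _ => ?_
          simp [Matrix.one_apply, Ne.symm hb]
        · simp
      rw [← h2]
      exact h1
    have hinner : ⟪Φ, vE - Φ⟫_ℂ = 0 := by
      rw [PiLp.inner_apply]
      refine Finset.sum_eq_zero ?_
      rintro ⟨a, j⟩ -
      rw [RCLike.inner_apply]
      by_cases hj : j = z
      · subst hj
        rw [hsub, hvp a, sub_self, zero_mul]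
      · have hΦ0 : Φ (a, j) = 0 := by
          show ((1 / C : ℝ) : ℂ) * ((MψE : Fin d → ℂ) a *
            (EuclideanSpace.single z (1 : ℂ)) j) = 0
          rw [EuclideanSpace.single_apply, if_neg hj, mul_zero, mul_zero]
        rw [hΦ0, map_zero, mul_zero]
    have hpyth := @norm_add_sq ℂ _ _ _ _ Φ (vE - Φ)
    rw [hinner, add_sub_cancel, hvnorm, hΦnorm] at hpyth
    simp only [map_zero, mul_zero, add_zero, one_pow] at hpyth
    rw [div_pow, one_pow] at hpyth
    linarith
  · abel
end

section
/- Let A : Fin d → Fin d → Matrix (Fin D) (Fin D) ℂ be a bulk tensor and let L, R ∈ Matrix (Fin D) (Fin D) ℂ be invertible. For n ≥ 1 define V_n : ℂ^{(Fin n → Fin d)} → ℂ^{Fin D × (Fin n → Fin d) × Fin D} by (V_n)_{(a, i⃗, b), j⃗} := Σ_{a', b'} L_{a a'} · (T^{i⃗, j⃗})_{a' b'} · R_{b' b}, where T^{i⃗,j⃗} is the ordered product A^{i₁ j₁} * ⋯ * A^{i_n j_n}. Then for all n, m ≥ 1 the following merging identity holds: for all bond indices a, b, c, c' ∈ Fin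 D and all physical multi-indices i⃗₁, j⃗₁ (of length n) and i⃗₂, j⃗₂ (of length m), Σ_{β, γ, α ∈ Fin D} (V_n)_{(a, i⃗₁, β), j⃗₁} · (R⁻¹)_{β γ} · (L⁻¹)_{γ α} · (V_m)_{(α, i⃗₂, b), j⃗₂} · δ_{c,0} · δ_{c',0} equals δ_{c,0} · δ_{c',0} · (V_{n+m})_{(a, i⃗₁⌢i⃗₂, b), j⃗₁⌢j⃗₂}; equivalently, applying the rank-one map M x := (Σ_{β,α,γ} (R⁻¹)_{β γ} (L⁻¹)_{γ α} x_{(β,α)}) • (e 0 ⊗ e 0) to the two middle bond registers of V_n ⊗ V_m yields (e 0 ⊗ e 0) tensored with V_{n+m}. -/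
/-! The boundary operators cancel in the middle: `(L T₁ R) R⁻¹ L⁻¹ (L T₂ R) = L (T₁ T₂) R`, and
`T₁ T₂` is the ordered product over the concatenated multi-indices. The Kronecker deltas in the
two extra bond registers are spectators. -/

open Matrix

/-- Ordered product of the bulk tensors of a uniform matrix-product operator along the
physical multi-indices `i, j`. -/
noncomputable def uniformT {d D : ℕ} (A : Fin d → Fin d → Matrix (Fin D) (Fin D) ℂ)
    {n : ℕ} (i j : Fin n → Fin d) : Matrix (Fin D) (Fin D) ℂ :=
  (List.ofFn fun k => A (i k) (j k)).prod

/-- The tensor `V_n^{[L,R]}` obtained by contracting `n` bulk tensors with the boundary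
operators `L` and `R`, viewed as a matrix from the physical input to
(left bond) × (physical output) × (right bond). -/
noncomputable def VuMat {d D : ℕ} (A : Fin d → Fin d → Matrix (Fin D) (Fin D) ℂ)
    (L R : Matrix (Fin D) (Fin D) ℂ) (n : ℕ) :
    Matrix (Fin D × (Fin n → Fin d) × Fin D) (Fin n → Fin d) ℂ :=
  Matrix.of fun p jv =>
    ∑ a' : Fin D, ∑ b' : Fin D, L p.1 a' * uniformT A p.2.1 jv a' b' * R b' p.2.2

lemma Matrix.sum_mul_mul_mul_apply {ι α : Type*} [Fintype ι] [NonUnitalSemiring α]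
    (M₁ M₂ M₃ M₄ : Matrix ι ι α) (a b : ι) :
    ∑ β, ∑ γ, ∑ δ, M₁ a β * M₂ β γ * M₃ γ δ * M₄ δ b = (M₁ * M₂ * M₃ * M₄) a b := by
  rw [Matrix.mul_assoc, Matrix.mul_assoc]
  simp only [mul_apply, Finset.mul_sum, _root_.mul_assoc]

lemma Matrix.mul_mul_inv_mul_inv_mul_mul {ι α : Type*} [Fintype ι] [DecidableEq ι] [CommRing α]
    {L R : Matrix ι ι α} (hL : IsUnit L.det) (hR : IsUnit R.det) (X Y : Matrix ι ι α) :
    L * X * R * R⁻¹ * L⁻¹ * (L * Y * R) = L * (X * Y) * R := by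
  rw [mul_nonsing_inv_cancel_right _ _ hR, Matrix.mul_assoc (L * X), Matrix.mul_assoc L Y,
    nonsing_inv_mul_cancel_left _ _ hL]
  simp only [Matrix.mul_assoc]

section

variable {d D : ℕ} (A : Fin d → Fin d → Matrix (Fin D) (Fin D) ℂ)

lemma uniformT_append {n m : ℕ} (i₁ j₁ : Fin n → Fin d) (i₂ j₂ : Fin m → Fin d) :
    uniformT A (Fin.append i₁ i₂) (Fin.append j₁ j₂) = uniformT A i₁ j₁ * uniformT A i₂ j₂ := by
  simp [uniformT, List.ofFn_add]

lemma VuMat_apply (L R : Matrix (Fin D) (Fin D) ℂ) (n : ℕ) (a b : Fin D) (i j : Fin n → Fin d) :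
    VuMat A L R n (a, i, b) j = (L * uniformT A i j * R) a b := by
  simp only [VuMat, of_apply, mul_apply, Finset.sum_mul]
  exact Finset.sum_comm

end

theorem merging_identity_general (d D : ℕ) (hD : 0 < D)
    (A : Fin d → Fin d → Matrix (Fin D) (Fin D) ℂ)
    (L R : Matrix (Fin D) (Fin D) ℂ) (hL : IsUnit L.det) (hR : IsUnit R.det) :
    ∀ n m : ℕ, 1 ≤ n → 1 ≤ m →
      ∀ (a b c c' : Fin D) (i1 j1 : Fin n → Fin d) (i2 j2 : Fin m → Fin d),
        (∑ β : Fin D, ∑ γ : Fin D, ∑ α : Fin D,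
            VuMat A L R n (a, i1, β) j1 * R⁻¹ β γ * L⁻¹ γ α *
              VuMat A L R m (α, i2, b) j2 *
              (if c = (⟨0, hD⟩ : Fin D) then 1 else 0) *
              (if c' = (⟨0, hD⟩ : Fin D) then 1 else 0))
          = (if c = (⟨0, hD⟩ : Fin D) then 1 else 0) *
            (if c' = (⟨0, hD⟩ : Fin D) then 1 else 0) *
            VuMat A L R (n + m) (a, Fin.append i1 i2, b) (Fin.append j1 j2) := by
  intro n m _ _ a b c c' i1 j1 i2 j2
  simp only [VuMat_apply, ← Finset.sum_mul]
  rw [Matrix.sum_mul_mul_mul_apply, Matrix.mul_mul_inv_mul_inv_mul_mul hL hR, uniformT_append]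
  ring

/-- **Merging identity** (Eq. (7) of the main text): applying the rank-one map
`M = |00⟩⟨𝟙| (R⁻¹ ⊗ L⁻¹)` to the two middle bond registers of `V_n ⊗ V_m` yields
`|00⟩ ⊗ V_{n+m}`. -/
theorem merging_identity (d D : ℕ) (hd : 0 < d) (hD : 0 < D)
    (A : Fin d → Fin d → Matrix (Fin D) (Fin D) ℂ)
    (L R : Matrix (Fin D) (Fin D) ℂ) (hL : IsUnit L.det) (hR : IsUnit R.det) :
    ∀ n m : ℕ, 1 ≤ n → 1 ≤ m →
      ∀ (a b c c' : Fin D) (i1 j1 : Fin n → Fin d) (i2 j2 : Fin m → Fin d),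
        (∑ β : Fin D, ∑ γ : Fin D, ∑ α : Fin D,
            VuMat A L R n (a, i1, β) j1 * R⁻¹ β γ * L⁻¹ γ α *
              VuMat A L R m (α, i2, b) j2 *
              (if c = (⟨0, hD⟩ : Fin D) then 1 else 0) *
              (if c' = (⟨0, hD⟩ : Fin D) then 1 else 0))
          = (if c = (⟨0, hD⟩ : Fin D) then 1 else 0) *
            (if c' = (⟨0, hD⟩ : Fin D) then 1 else 0) *
            VuMat A L R (n + m) (a, Fin.append i1 i2, b) (Fin.append j1 j2) :=
  merging_identity_general d D hD A L R hL hR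
end

section
/- Let A be a unital ℂ-algebra with a star operation compatible with the algebra structure, and let τe, τσ ∈ A be self-adjoint elements satisfying τe² = τe, τe·τσ = τσ·τe = τσ, and τσ² = τe + τσ. With ζ² := (√5 − 1)/2, p := (1/√5) • (ζ² • τe + τσ) and q := τe − p, let α, β ∈ ℝ and define u := exp(i α) • p + exp(i β) • q. Then u*·u = u·u* = τe; that is, u is unitary relative to the unit τe of the subalgebra spanned by τe and τσ. -/
open Complex

/-- **Unitary elements from Fibonacci fusion rules**: with `p, q` the Fibonacci
projectors built from self-adjoint `τe, τσ` satisfying the fusion rules, the element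
`u = e^{iα} p + e^{iβ} q` satisfies `u* u = u u* = τe`, i.e. it is unitary relative to
the unit `τe` of the subalgebra spanned by `τe` and `τσ`. -/
theorem fibonacci_unitary_element (A : Type*) [Ring A] [Algebra ℂ A]
    [StarRing A] [StarModule ℂ A]
    (τe τσ : A) (hτe : star τe = τe) (hτσ : star τσ = τσ)
    (h1 : τe * τe = τe) (h2 : τe * τσ = τσ) (h3 : τσ * τe = τσ)
    (h4 : τσ * τσ = τe + τσ) (α β : ℝ) :
    let p : A := ((1 / Real.sqrt 5 : ℝ) : ℂ) •
      ((((Real.sqrt 5 - 1) / 2 : ℝ) : ℂ) • τe + τσ)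
    let q : A := τe - p
    let u : A := Complex.exp (α * Complex.I) • p + Complex.exp (β * Complex.I) • q
    star u * u = τe ∧ u * star u = τe := by
  intro p q u
  have hs : ((Real.sqrt 5 : ℝ) : ℂ) * ((Real.sqrt 5 : ℝ) : ℂ) = 5 := by
    norm_cast; exact Real.mul_self_sqrt (by norm_num)
  have hs0 : ((Real.sqrt 5 : ℝ) : ℂ) ≠ 0 := by
    intro h; rw [h] at hs; simp at hs
  have hp2 : p * p = p := by
    simp only [p, smul_mul_smul_comm, mul_add, add_mul, smul_mul_assoc, mul_smul_comm,
      h1, h2, h3, h4, smul_add, smul_smul]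
    match_scalars
    · field_simp [hs0]
      ring_nf
      linear_combination (-1:ℂ) * hs
    · field_simp [hs0]
      ring_nf
  have hpe : p * τe = p := by
    simp only [p, smul_mul_assoc, add_mul, smul_mul_assoc, h1, h3]
  have hep : τe * p = p := by
    simp only [p, mul_smul_comm, mul_add, mul_smul_comm, h1, h2]
  have hpq : p * q = 0 := by
    simp only [q, mul_sub, hpe, hp2, sub_self]
  have hqp : q * p = 0 := by
    simp only [q, sub_mul, hep, hp2, sub_self]
  have hq2 : q * q = q := by
    simp only [q, mul_sub, sub_mul, h1, hep, hpe, hp2, sub_self, sub_zero]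
  have hsp : star p = p := by
    simp only [p, star_smul, star_add, star_smul, hτe, hτσ, RCLike.star_def,
      Complex.conj_ofReal]
  have hsq : star q = q := by
    simp only [q, star_sub, hτe, hsp]
  have ha : ∀ γ : ℝ, (starRingEnd ℂ) (Complex.exp (γ * Complex.I)) *
      Complex.exp (γ * Complex.I) = 1 := by
    intro γ
    rw [← Complex.exp_conj, ← Complex.exp_add]
    simp
  have ha' : ∀ γ : ℝ, Complex.exp (γ * Complex.I) *
      (starRingEnd ℂ) (Complex.exp (γ * Complex.I)) = 1 := by
    intro γ; rw [mul_comm]; exact ha γ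
  have hpqe : p + q = τe := by simp [q]
  constructor
  · show star u * u = τe
    simp only [u, star_add, star_smul, hsp, hsq, add_mul, mul_add,
      smul_mul_smul_comm, hp2, hpq, hqp, hq2, smul_zero, RCLike.star_def, ha, one_smul,
      add_zero, zero_add]
    exact hpqe
  · show u * star u = τe
    simp only [u, star_add, star_smul, hsp, hsq, add_mul, mul_add,
      smul_mul_smul_comm, hp2, hpq, hqp, hq2, smul_zero, RCLike.star_def, ha', one_smul,
      add_zero, zero_add]
    exact hpqe
end
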